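/- arXiv:2406.07460 — 2 statements merged into one kernel-verified Lean document; each statement's English description precedes it below -/
import Mathlib

section
/- Let E be a real normed vector space and N > 0. For all u, v ∈ E with ‖u‖ > 0 and ‖v‖ > 0, one has |F_N(‖u‖) − F_N(‖v‖)| ≤ (1/N) · F_N(‖u‖) · F_N(‖v‖) · ‖u − v‖. -/
/-- The cut-off function `F_N(r) = min {1, N/r}`. -/
noncomputable def FN (N r : ℝ) : ℝ := min 1 (N / r)

/-! On `(0, ∞)` one has `F_N(r) = N / max r N`, and `r ↦ max r N` is `1`-Lipschitz with values
`≥ N > 0`; the bound is then the identity `N/A - N/B = N (B - A) / (A B)`. -/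

lemma FN_eq_div_max {N r : ℝ} (hN : 0 < N) (hr : 0 < r) : FN N r = N / max r N := by
  unfold FN
  rcases le_total r N with h | h
  · rw [max_eq_right h, min_eq_left ((one_le_div hr).2 h), div_self hN.ne']
  · rw [max_eq_left h, min_eq_right ((div_le_one hr).2 h)]

lemma abs_div_sub_div_le {N A B d : ℝ} (hN : 0 < N) (hA : 0 < A) (hB : 0 < B)
    (h : |A - B| ≤ d) : |N / A - N / B| ≤ 1 / N * (N / A) * (N / B) * d := by
  calc |N / A - N / B| = N * |A - B| / (A * B) := by
        rw [div_sub_div _ _ hA.ne' hB.ne', abs_div, abs_of_pos (mul_pos hA hB),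
          show N * B - A * N = N * (B - A) by ring, abs_mul, abs_of_pos hN, abs_sub_comm]
    _ ≤ N * d / (A * B) := by gcongr
    _ = 1 / N * (N / A) * (N / B) * d := by field_simp

theorem cutoff_lipschitz_norm_general {E : Type*} [NormedAddCommGroup E]
    (N : ℝ) (hN : 0 < N) (u v : E) (hu : 0 < ‖u‖) (hv : 0 < ‖v‖) :
    |FN N ‖u‖ - FN N ‖v‖| ≤ (1 / N) * FN N ‖u‖ * FN N ‖v‖ * ‖u - v‖ := by
  rw [FN_eq_div_max hN hu, FN_eq_div_max hN hv]
  exact abs_div_sub_div_le hN (hN.trans_le (le_max_right _ _)) (hN.trans_le (le_max_right _ _))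
    ((abs_max_sub_max_le_abs _ _ _).trans (abs_norm_sub_norm_le u v))

theorem cutoff_lipschitz_norm {E : Type*} [NormedAddCommGroup E] [NormedSpace ℝ E]
    (N : ℝ) (hN : 0 < N) (u v : E) (hu : 0 < ‖u‖) (hv : 0 < ‖v‖) :
    |FN N ‖u‖ - FN N ‖v‖| ≤ (1 / N) * FN N ‖u‖ * FN N ‖v‖ * ‖u - v‖ :=
  cutoff_lipschitz_norm_general N hN u v hu hv
end

section
/- Let f : ℝ × ℝ³ → ℝ³ be jointly measurable and f_∞ : ℝ³ → ℝ³ be measurable with ∫_{ℝ³} |f_∞(x)|² dx < ∞. Suppose that the map t ↦ ∫_{ℝ³} |f(t,x)|² dx is integrable on every compact interval and that f satisfies Assumption (F) in the L²(ℝ³) norm, i.e. t ↦ ∫_{ℝ³} |f(t,x) − f_∞(x)|² dx is integrable on (−∞, τ] for every τ and its integral over (−∞, τ] tends to 0 as τ → −∞. Then for every κ > 0 and every τ ∈ ℝ, lim_{k→∞} sup_{s ≤ τ} ∫_{−∞}^{s} e^{κ(r−s)} ∫_{{x ∈ ℝ³ : |x| ≥ k}} |f(r,x)|² dx dr = 0;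 that is, the tails of the forcing f are backward-uniformly small. -/
open MeasureTheory Filter Set Topology

/-!
Since `‖f‖² ≤ 2‖f - f∞‖² + 2‖f∞‖²`, and the weight `exp (κ (r - s))` is at most `1` on `r ≤ s`
with integral `1/κ` there, the weighted tail at any `s ≤ τ` is bounded by
`2 ∫_{-∞}^τ ∫_{|x| ≥ k} ‖f - f∞‖² + (2/κ) ∫_{|x| ≥ k} ‖f∞‖²`, independently of `s`.
Both terms tend to `0` as `k → ∞`: spatial tails of an integrable function vanish, and in the
time integral they are dominated by the integrable function `t ↦ ∫ ‖f (t, ·) - f∞‖²`.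
-/

lemma norm_sq_le_two_mul_norm_sub_sq_add {G : Type*} [SeminormedAddCommGroup G] (a b : G) :
    ‖a‖ ^ 2 ≤ 2 * ‖a - b‖ ^ 2 + 2 * ‖b‖ ^ 2 := by
  calc ‖a‖ ^ 2 ≤ (‖a - b‖ + ‖b‖) ^ 2 := by gcongr; exact norm_le_norm_sub_add a b
    _ ≤ 2 * (‖a - b‖ ^ 2 + ‖b‖ ^ 2) := add_sq_le
    _ = 2 * ‖a - b‖ ^ 2 + 2 * ‖b‖ ^ 2 := by ring

lemma integral_norm_sq_le_two_mul_integral_norm_sub_sq_add {X G : Type*} [MeasurableSpace X]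
    [SeminormedAddCommGroup G] {μ : Measure X} {u v : X → G}
    (huv : Integrable (fun x => ‖u x - v x‖ ^ 2) μ) (hv : Integrable (fun x => ‖v x‖ ^ 2) μ) :
    ∫ x, ‖u x‖ ^ 2 ∂μ ≤ 2 * ∫ x, ‖u x - v x‖ ^ 2 ∂μ + 2 * ∫ x, ‖v x‖ ^ 2 ∂μ := by
  rw [← integral_const_mul, ← integral_const_mul, ← integral_add (huv.const_mul 2) (hv.const_mul 2)]
  exact integral_mono_of_nonneg (ae_of_all _ fun x => by positivity)
    ((huv.const_mul 2).add (hv.const_mul 2))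
    (ae_of_all _ fun x => norm_sq_le_two_mul_norm_sub_sq_add _ _)

section ExponentialWeight

variable {κ s : ℝ}

lemma exp_mul_sub_le_one (hκ : 0 ≤ κ) {r : ℝ} (hr : r ≤ s) : Real.exp (κ * (r - s)) ≤ 1 :=
  Real.exp_le_one_iff.mpr (mul_nonpos_of_nonneg_of_nonpos hκ (sub_nonpos.mpr hr))

lemma integrableOn_exp_mul_sub_Iic (hκ : 0 < κ) (s : ℝ) :
    IntegrableOn (fun r => Real.exp (κ * (r - s))) (Iic s) := by
  have h : IntegrableOn (fun r => Real.exp (κ * r) / Real.exp (κ * s)) (Iic s) :=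
    (integrableOn_exp_mul_Iic hκ s).div_const _
  simpa [mul_sub, Real.exp_sub] using h

lemma integral_exp_mul_sub_Iic (hκ : 0 < κ) (s : ℝ) :
    ∫ r in Iic s, Real.exp (κ * (r - s)) = κ⁻¹ := by
  simp_rw [mul_sub, Real.exp_sub, integral_div, integral_exp_mul_Iic hκ]
  field_simp

lemma integrableOn_exp_mul_sub_mul {G : ℝ → ℝ} (hκ : 0 ≤ κ) (hG : IntegrableOn G (Iic s)) :
    IntegrableOn (fun r => Real.exp (κ * (r - s)) * G r) (Iic s) := by
  have hw : Continuous fun r => Real.exp (κ * (r - s)) := by fun_prop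
  refine hG.norm.mono' (hw.aestronglyMeasurable.mul hG.aestronglyMeasurable) ?_
  filter_upwards [ae_restrict_mem measurableSet_Iic] with r hr
  rw [norm_mul, Real.norm_of_nonneg (Real.exp_pos _).le]
  exact mul_le_of_le_one_left (norm_nonneg _) (exp_mul_sub_le_one hκ hr)

lemma setIntegral_exp_mul_sub_mul_le {τ c : ℝ} {φ G : ℝ → ℝ} (hκ : 0 < κ) (hs : s ≤ τ)
    (hφ : AEStronglyMeasurable φ (volume.restrict (Iic s))) (hφ0 : 0 ≤ φ) (hG0 : 0 ≤ G)
    (hG : IntegrableOn G (Iic τ)) (hφG : ∀ᵐ r, φ r ≤ G r + c) :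
    IntegrableOn (fun r => Real.exp (κ * (r - s)) * φ r) (Iic s) ∧
      ∫ r in Iic s, Real.exp (κ * (r - s)) * φ r ≤ (∫ r in Iic τ, G r) + c / κ := by
  have hGs : IntegrableOn G (Iic s) := hG.mono_set (Iic_subset_Iic.mpr hs)
  have hwG := integrableOn_exp_mul_sub_mul hκ.le hGs
  have hw := (integrableOn_exp_mul_sub_Iic hκ s).const_mul c
  have hdom : ∀ᵐ r ∂volume.restrict (Iic s),
      Real.exp (κ * (r - s)) * φ r ≤ Real.exp (κ * (r - s)) * G r + c * Real.exp (κ * (r - s)) :=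
    (ae_restrict_of_ae hφG).mono fun r hr => by
      nlinarith [mul_le_mul_of_nonneg_left hr (Real.exp_pos (κ * (r - s))).le]
  have hint : IntegrableOn (fun r => Real.exp (κ * (r - s)) * φ r) (Iic s) := by
    refine (hwG.add hw).mono'
      ((by fun_prop : Continuous fun r => Real.exp (κ * (r - s))).aestronglyMeasurable.mul hφ) ?_
    filter_upwards [hdom] with r hr
    rwa [Real.norm_of_nonneg (mul_nonneg (Real.exp_pos _).le (hφ0 r))]
  refine ⟨hint, ?_⟩
  calc ∫ r in Iic s, Real.exp (κ * (r - s)) * φ r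
      ≤ ∫ r in Iic s, (Real.exp (κ * (r - s)) * G r + c * Real.exp (κ * (r - s))) :=
        integral_mono_ae hint (hwG.add hw) hdom
    _ = (∫ r in Iic s, Real.exp (κ * (r - s)) * G r) + c / κ := by
        rw [integral_add hwG hw, integral_const_mul, integral_exp_mul_sub_Iic hκ, div_eq_mul_inv]
    _ ≤ (∫ r in Iic s, G r) + c / κ := by
        refine add_le_add (setIntegral_mono_on hwG hGs measurableSet_Iic fun r hr => ?_) le_rfl
        exact mul_le_of_le_one_left (hG0 r) (exp_mul_sub_le_one hκ.le hr)
    _ ≤ (∫ r in Iic τ, G r) + c / κ :=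
        add_le_add
          (setIntegral_mono_set hG (ae_of_all _ hG0) (Iic_subset_Iic.mpr hs).eventuallyLE) le_rfl

end ExponentialWeight

section SliceIntegrals

variable {α X : Type*} [MeasurableSpace α] [MeasurableSpace X] {μ : Measure α} {ν : Measure X}
  {d : α × X → ℝ}

lemma ae_norm_setIntegral_le_integral (hd0 : 0 ≤ d)
    (hdi : ∀ᵐ t ∂μ, Integrable (fun x => d (t, x)) ν) (S : Set X) :
    ∀ᵐ t ∂μ, ‖∫ x in S, d (t, x) ∂ν‖ ≤ ∫ x, d (t, x) ∂ν := by
  filter_upwards [hdi] with t ht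
  rw [Real.norm_of_nonneg (integral_nonneg fun x => hd0 (t, x))]
  exact setIntegral_le_integral ht (ae_of_all _ fun x => hd0 _)

lemma integrable_setIntegral_of_integrable_integral [SFinite ν] (hd : StronglyMeasurable d)
    (hd0 : 0 ≤ d) (hdi : ∀ᵐ t ∂μ, Integrable (fun x => d (t, x)) ν)
    (hH : Integrable (fun t => ∫ x, d (t, x) ∂ν) μ) (S : Set X) :
    Integrable (fun t => ∫ x in S, d (t, x) ∂ν) μ :=
  hH.mono' (hd.integral_prod_right' (ν := ν.restrict S)).aestronglyMeasurable
    (ae_norm_setIntegral_le_integral hd0 hdi S)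

end SliceIntegrals

section Tails

variable {E : Type*} [NormedAddCommGroup E] [MeasurableSpace E] [OpensMeasurableSpace E]
  {ν : Measure E}

lemma tendsto_setIntegral_le_norm_atTop {F : Type*} [NormedAddCommGroup F] [NormedSpace ℝ F]
    {g : E → F} (hg : Integrable g ν) :
    Tendsto (fun k : ℕ => ∫ x in {x | (k : ℝ) ≤ ‖x‖}, g x ∂ν) atTop (𝓝 0) := by
  have hempty : ⋂ k : ℕ, {x : E | (k : ℝ) ≤ ‖x‖} = ∅ := by
    ext x
    simpa using exists_nat_gt ‖x‖
  simpa [hempty] using tendsto_setIntegral_of_antitone (μ := ν)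
    (s := fun k : ℕ => {x : E | (k : ℝ) ≤ ‖x‖})
    (fun k => measurableSet_le measurable_const measurable_norm)
    (fun i j hij x (hx : (j : ℝ) ≤ ‖x‖) =>
      show (i : ℝ) ≤ ‖x‖ from (Nat.cast_le.mpr hij).trans hx)
    ⟨0, hg.integrableOn⟩

lemma tendsto_integral_setIntegral_le_norm_atTop {α : Type*} [MeasurableSpace α] {μ : Measure α}
    [SFinite ν] {d : α × E → ℝ} (hd : StronglyMeasurable d) (hd0 : 0 ≤ d)
    (hdi : ∀ᵐ t ∂μ, Integrable (fun x => d (t, x)) ν)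
    (hH : Integrable (fun t => ∫ x, d (t, x) ∂ν) μ) :
    Tendsto (fun k : ℕ => ∫ t, ∫ x in {x | (k : ℝ) ≤ ‖x‖}, d (t, x) ∂ν ∂μ) atTop (𝓝 0) := by
  simpa using tendsto_integral_of_dominated_convergence _
    (fun k => (hd.integral_prod_right' (ν := ν.restrict {x | (k : ℝ) ≤ ‖x‖})).aestronglyMeasurable)
    hH (fun k => ae_norm_setIntegral_le_integral hd0 hdi _)
    (hdi.mono fun t ht => tendsto_setIntegral_le_norm_atTop ht)

end Tails

theorem backward_uniform_tail_smallness_general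
    (f : ℝ × EuclideanSpace ℝ (Fin 3) → EuclideanSpace ℝ (Fin 3))
    (finf : EuclideanSpace ℝ (Fin 3) → EuclideanSpace ℝ (Fin 3))
    (hf : Measurable f) (hfinf : Measurable finf)
    (hfinf2 : Integrable (fun x => ‖finf x‖ ^ 2))
    (hFae : ∀ᵐ t : ℝ, Integrable (fun x => ‖f (t, x) - finf x‖ ^ 2))
    (hF1 : ∀ τ : ℝ, IntegrableOn (fun t => ∫ x, ‖f (t, x) - finf x‖ ^ 2) (Set.Iic τ)) :
    ∀ κ : ℝ, 0 < κ → ∀ τ : ℝ, ∀ ε : ℝ, 0 < ε → ∃ K : ℕ, ∀ k : ℕ, K ≤ k → ∀ s ≤ τ,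
      IntegrableOn
        (fun r => Real.exp (κ * (r - s)) *
          ∫ x in {x : EuclideanSpace ℝ (Fin 3) | (k : ℝ) ≤ ‖x‖}, ‖f (r, x)‖ ^ 2)
        (Set.Iic s) ∧
      (∫ r in Set.Iic s, Real.exp (κ * (r - s)) *
          ∫ x in {x : EuclideanSpace ℝ (Fin 3) | (k : ℝ) ≤ ‖x‖}, ‖f (r, x)‖ ^ 2) ≤ ε := by
  intro κ hκ τ ε hε
  set B : ℕ → Set (EuclideanSpace ℝ (Fin 3)) := fun k => {x | (k : ℝ) ≤ ‖x‖}
  have hd : StronglyMeasurable fun p : ℝ × EuclideanSpace ℝ (Fin 3) => ‖f p - finf p.2‖ ^ 2 :=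
    ((hf.sub (hfinf.comp measurable_snd)).norm.pow_const 2).stronglyMeasurable
  have hd0 : 0 ≤ fun p : ℝ × EuclideanSpace ℝ (Fin 3) => ‖f p - finf p.2‖ ^ 2 :=
    fun p => by positivity
  have hdi := ae_restrict_of_ae (s := Iic τ) hFae
  have hlim : Tendsto (fun k => 2 * (∫ t in Iic τ, ∫ x in B k, ‖f (t, x) - finf x‖ ^ 2) +
      2 * (∫ x in B k, ‖finf x‖ ^ 2) / κ) atTop (𝓝 0) := by
    simpa using ((tendsto_integral_setIntegral_le_norm_atTop hd hd0 hdi (hF1 τ)).const_mul 2).add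
      (((tendsto_setIntegral_le_norm_atTop hfinf2).const_mul 2).div_const κ)
  obtain ⟨K, hK⟩ := eventually_atTop.mp (hlim.eventually_lt_const hε)
  refine ⟨K, fun k hk s hs => ?_⟩
  have hbound := setIntegral_exp_mul_sub_mul_le hκ hs
    (hf.norm.pow_const 2).stronglyMeasurable.integral_prod_right'.aestronglyMeasurable
    (fun r => integral_nonneg fun x => by positivity)
    (fun t => mul_nonneg zero_le_two (integral_nonneg fun x => by positivity))
    ((integrable_setIntegral_of_integrable_integral hd hd0 hdi (hF1 τ) (B k)).const_mul 2)
    (hFae.mono fun r hr => integral_norm_sq_le_two_mul_integral_norm_sub_sq_add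
      (u := fun x => f (r, x)) hr.integrableOn hfinf2.integrableOn)
  refine ⟨hbound.1, hbound.2.trans ?_⟩
  rw [integral_const_mul]
  exact (hK k hk).le

/-- Backward-uniform smallness of the tails of the forcing `f`. -/
theorem backward_uniform_tail_smallness
    (f : ℝ × EuclideanSpace ℝ (Fin 3) → EuclideanSpace ℝ (Fin 3))
    (finf : EuclideanSpace ℝ (Fin 3) → EuclideanSpace ℝ (Fin 3))
    (hf : Measurable f) (hfinf : Measurable finf)
    (hfinf2 : Integrable (fun x => ‖finf x‖ ^ 2))
    (hloc : ∀ a b : ℝ, IntegrableOn (fun t => ∫ x, ‖f (t, x)‖ ^ 2) (Set.Icc a b))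
    (hFae : ∀ᵐ t : ℝ, Integrable (fun x => ‖f (t, x) - finf x‖ ^ 2))
    (hF1 : ∀ τ : ℝ, IntegrableOn (fun t => ∫ x, ‖f (t, x) - finf x‖ ^ 2) (Set.Iic τ))
    (hF2 : Tendsto (fun τ => ∫ t in Set.Iic τ, ∫ x, ‖f (t, x) - finf x‖ ^ 2)
      atBot (nhds 0)) :
    ∀ κ : ℝ, 0 < κ → ∀ τ : ℝ, ∀ ε : ℝ, 0 < ε → ∃ K : ℕ, ∀ k : ℕ, K ≤ k → ∀ s ≤ τ,
      IntegrableOn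
        (fun r => Real.exp (κ * (r - s)) *
          ∫ x in {x : EuclideanSpace ℝ (Fin 3) | (k : ℝ) ≤ ‖x‖}, ‖f (r, x)‖ ^ 2)
        (Set.Iic s) ∧
      (∫ r in Set.Iic s, Real.exp (κ * (r - s)) *
          ∫ x in {x : EuclideanSpace ℝ (Fin 3) | (k : ℝ) ≤ ‖x‖}, ‖f (r, x)‖ ^ 2) ≤ ε :=
  backward_uniform_tail_smallness_general f finf hf hfinf hfinf2 hFae hF1
end
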